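/- Let $E_1$ be a non-degenerate subset of $Gr(n, m_1)$ and $E_2$ a non-degenerate subset of $Gr(n, m_2)$ with $m_1 + m_2 < n$. Then for every $W_1 \in E_1$ one has $W_1 = \bigcap \{W_1 + W_2 : W_2 \in E_2, \ W_1 \cap W_2 = 0\}$. -/

import Mathlib

/-!
Given `x ∉ W₁`, extend `W₁ + ⟨x⟩` (of dimension `m₁ + 1 ≤ n - m₂`) to a subspace `U` of
dimension `n - m₂`. Non-degeneracy of `E₂` gives `W₂ ∈ E₂` with `W₂ ∩ U = 0`; then
`W₁ ∩ W₂ = 0`, and by the modular law `(W₁ + W₂) ∩ U = W₁`, so `x ∉ W₁ + W₂`.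
-/

open Module

variable {K V : Type*} [DivisionRing K] [AddCommGroup V] [Module K V]

def IsNondegenerate (E : Set (Submodule K V)) (m : ℕ) : Prop :=
  ∀ U : Submodule K V, finrank K U = finrank K V - m → ∃ W ∈ E, W ⊓ U = ⊥

variable [FiniteDimensional K V]

namespace Submodule

theorem finrank_span_singleton_sup_of_notMem {x : V} {W : Submodule K V} (hx : x ∉ W) :
    finrank K ↥(K ∙ x ⊔ W) = finrank K W + 1 := by
  have hx0 : x ≠ 0 := fun h => hx (h ▸ W.zero_mem)
  have hdisj : K ∙ x ⊓ W = ⊥ := ((disjoint_span_singleton' hx0).mpr hx).symm.eq_bot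
  have := finrank_sup_add_finrank_inf_eq (K ∙ x) W
  rw [hdisj, finrank_bot, finrank_span_singleton hx0] at this
  omega

theorem exists_le_finrank_eq (W : Submodule K V) {k : ℕ} (hWk : finrank K W ≤ k)
    (hk : k ≤ finrank K V) : ∃ U : Submodule K V, W ≤ U ∧ finrank K U = k := by
  induction k with
  | zero => exact ⟨W, le_rfl, by omega⟩
  | succ k ih =>
    rcases hWk.eq_or_lt with hW | hW
    · exact ⟨W, le_rfl, hW⟩
    obtain ⟨U, hWU, hU⟩ := ih (by omega) (by omega)
    have hUtop : U < ⊤ := lt_top_of_finrank_lt_finrank (by omega)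
    obtain ⟨x, -, hx⟩ := SetLike.exists_of_lt hUtop
    exact ⟨K ∙ x ⊔ U, hWU.trans le_sup_right, by rw [finrank_span_singleton_sup_of_notMem hx, hU]⟩

end Submodule

theorem IsNondegenerate.exists_disjoint_notMem_sup {E : Set (Submodule K V)} {m : ℕ}
    (hE : IsNondegenerate E m) {W : Submodule K V} (hW : finrank K W + m < finrank K V)
    {x : V} (hx : x ∉ W) : ∃ W₂ ∈ E, W ⊓ W₂ = ⊥ ∧ x ∉ W ⊔ W₂ := by
  obtain ⟨U, hxWU, hU⟩ := (K ∙ x ⊔ W).exists_le_finrank_eq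
    (k := finrank K V - m) (by rw [Submodule.finrank_span_singleton_sup_of_notMem hx]; omega)
    (by omega)
  have hWU : W ≤ U := le_sup_right.trans hxWU
  have hxU : x ∈ U := hxWU (Submodule.mem_sup_left (Submodule.mem_span_singleton_self x))
  obtain ⟨W₂, hW₂E, hW₂U⟩ := hE U hU
  have hsupU : (W ⊔ W₂) ⊓ U = W := by rw [sup_inf_assoc_of_le W₂ hWU, hW₂U, sup_bot_eq]
  have hdisj : W ⊓ W₂ = ⊥ :=
    eq_bot_iff.mpr ((inf_le_inf_right W₂ hWU).trans_eq (by rw [inf_comm, hW₂U]))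
  refine ⟨W₂, hW₂E, hdisj, fun hxW₂ => hx ?_⟩
  rw [← hsupU]
  exact ⟨hxW₂, hxU⟩

theorem IsNondegenerate.eq_sInf_sup {E : Set (Submodule K V)} {m : ℕ}
    (hE : IsNondegenerate E m) {W : Submodule K V} (hW : finrank K W + m < finrank K V) :
    W = sInf {U : Submodule K V | ∃ W₂ ∈ E, W ⊓ W₂ = ⊥ ∧ U = W ⊔ W₂} := by
  refine le_antisymm (le_sInf ?_) fun x hx => ?_
  · rintro U ⟨W₂, -, -, rfl⟩
    exact le_sup_left
  · by_contra hxW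
    obtain ⟨W₂, hW₂E, hdisj, hxW₂⟩ := hE.exists_disjoint_notMem_sup hW hxW
    exact hxW₂ (Submodule.mem_sInf.mp hx _ ⟨W₂, hW₂E, hdisj, rfl⟩)

theorem stmt7_general (p n m₁ m₂ : ℕ) (hp : p.Prime) (hmn : m₁ + m₂ < n)
    (E₁ E₂ : Set (Submodule (ZMod p) (Fin n → ZMod p)))
    (hE₁dim : ∀ W ∈ E₁, Module.finrank (ZMod p) W = m₁)
    (hE₂nd : ∀ V : Submodule (ZMod p) (Fin n → ZMod p),
      Module.finrank (ZMod p) V = n - m₂ → ∃ W ∈ E₂, W ⊓ V = ⊥)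
    (W₁ : Submodule (ZMod p) (Fin n → ZMod p)) (hW₁ : W₁ ∈ E₁) :
    W₁ = sInf {U : Submodule (ZMod p) (Fin n → ZMod p) |
      ∃ W₂ ∈ E₂, W₁ ⊓ W₂ = ⊥ ∧ U = W₁ ⊔ W₂} := by
  have : Fact p.Prime := ⟨hp⟩
  have hE₂ : IsNondegenerate E₂ m₂ := by
    rwa [IsNondegenerate, finrank_fin_fun]
  exact hE₂.eq_sInf_sup (by rw [hE₁dim W₁ hW₁, finrank_fin_fun]; omega)

theorem stmt7 (p n m₁ m₂ : ℕ) (hp : p.Prime) (hmn : m₁ + m₂ < n)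
    (E₁ E₂ : Set (Submodule (ZMod p) (Fin n → ZMod p)))
    (hE₁dim : ∀ W ∈ E₁, Module.finrank (ZMod p) W = m₁)
    (hE₂dim : ∀ W ∈ E₂, Module.finrank (ZMod p) W = m₂)
    (hE₁nd : ∀ V : Submodule (ZMod p) (Fin n → ZMod p),
      Module.finrank (ZMod p) V = n - m₁ → ∃ W ∈ E₁, W ⊓ V = ⊥)
    (hE₂nd : ∀ V : Submodule (ZMod p) (Fin n → ZMod p),
      Module.finrank (ZMod p) V = n - m₂ → ∃ W ∈ E₂, W ⊓ V = ⊥)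
    (W₁ : Submodule (ZMod p) (Fin n → ZMod p)) (hW₁ : W₁ ∈ E₁) :
    W₁ = sInf {U : Submodule (ZMod p) (Fin n → ZMod p) |
      ∃ W₂ ∈ E₂, W₁ ⊓ W₂ = ⊥ ∧ U = W₁ ⊔ W₂} :=
  stmt7_general p n m₁ m₂ hp hmn E₁ E₂ hE₁dim hE₂nd W₁ hW₁
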